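/- There is an absolute constant c > 0 such that for any 0 < η < 1 and any ẑ, z ∈ [η, Ψ(1)] in the range of Ψ, |Ψ⁻¹(ẑ) − Ψ⁻¹(z)| ≤ (c/√η)·|ẑ − z|, where Ψ⁻¹ denotes the inverse of the strictly increasing function Ψ(z) = (2/π)(z·arcsin(z) + √(1−z²) − 1) on [0,1]. -/

import Mathlib

open Real Set

/-!
`Ψ' = (2/π) arcsin ≥ (2/π) id` on `[0, 1]`, while `Ψ(z) ≤ z²` by Jordan's inequality.
Hence every preimage of a value `≥ η` lies in `[√η, 1]`, where `Ψ' ≥ (2/π)√η`, and the mean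
value theorem makes `Ψ⁻¹` Lipschitz with constant `(π/2)/√η` on `[η, Ψ(1)]`.
-/

noncomputable def psi (z : ℝ) : ℝ := (2 / π) * (z * arcsin z + √(1 - z ^ 2) - 1)

lemma psi_zero : psi 0 = 0 := by
  simp [psi]

lemma continuous_psi : Continuous psi := by
  unfold psi
  fun_prop

lemma hasDerivAt_psi {z : ℝ} (h₁ : -1 < z) (h₂ : z < 1) :
    HasDerivAt psi ((2 / π) * arcsin z) z := by
  have hpos : 0 < 1 - z ^ 2 := by nlinarith
  have hsq : HasDerivAt (fun z : ℝ => 1 - z ^ 2) (-(2 * z)) z := by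
    simpa using (hasDerivAt_pow 2 z).const_sub 1
  have h := ((((hasDerivAt_id z).mul (hasDerivAt_arcsin h₁.ne' h₂.ne)).add
    ((hasDerivAt_sqrt hpos.ne').comp z hsq)).sub_const 1).const_mul (2 / π)
  refine h.congr_deriv ?_
  have hsqrt : √(1 - z ^ 2) ≠ 0 := (sqrt_pos.2 hpos).ne'
  rw [id_eq]
  field_simp
  ring

lemma self_le_arcsin {z : ℝ} (h₀ : 0 ≤ z) (h₁ : z ≤ 1) : z ≤ arcsin z := by
  rw [le_arcsin_iff_sin_le ⟨by linarith [pi_div_two_pos], h₁.trans one_le_pi_div_two⟩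
    ⟨by linarith, h₁⟩]
  exact sin_le h₀

lemma arcsin_le_pi_div_two_mul {z : ℝ} (h₀ : 0 ≤ z) : arcsin z ≤ π / 2 * z := by
  rcases le_or_gt z 1 with h₁ | h₁
  · have hz : π / 2 * z ≤ π / 2 := by nlinarith [pi_pos]
    rw [arcsin_le_iff_le_sin ⟨by linarith, h₁⟩ ⟨by nlinarith [pi_pos], hz⟩]
    have hjordan := mul_le_sin (by positivity) hz
    rwa [← mul_assoc, div_mul_div_cancel₀ pi_ne_zero, div_self two_ne_zero, one_mul] at hjordan
  · rw [arcsin_of_one_le h₁.le]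
    nlinarith [pi_pos]

lemma psi_le_sq {z : ℝ} (h₀ : 0 ≤ z) : psi z ≤ z ^ 2 := by
  have harcsin : z * arcsin z ≤ π / 2 * z ^ 2 := by
    nlinarith [arcsin_le_pi_div_two_mul h₀]
  have hsqrt : √(1 - z ^ 2) ≤ 1 := sqrt_le_one.2 (by nlinarith)
  unfold psi
  rw [div_mul_eq_mul_div, div_le_iff₀ pi_pos]
  nlinarith

lemma mul_sub_le_psi_sub {m : ℝ} (hm : 0 ≤ m) :
    ∀ x ∈ Icc m 1, ∀ y ∈ Icc m 1, x ≤ y → (2 / π) * m * (y - x) ≤ psi y - psi x := by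
  have hderiv : ∀ z ∈ Ioo m 1, HasDerivAt psi ((2 / π) * arcsin z) z := fun z hz =>
    hasDerivAt_psi (by linarith [hz.1]) hz.2
  refine (convex_Icc m 1).mul_sub_le_image_sub_of_le_deriv continuous_psi.continuousOn
    (fun z hz => ?_) (fun z hz => ?_)
  all_goals rw [interior_Icc] at hz
  · exact (hderiv z hz).differentiableAt.differentiableWithinAt
  · rw [(hderiv z hz).deriv]
    have := self_le_arcsin (hm.trans hz.1.le) hz.2.le
    gcongr
    linarith [hz.1]

lemma abs_sub_le_div_of_mul_sub_le {f : ℝ → ℝ} {s : Set ℝ} {C : ℝ} (hC : 0 < C)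
    (hf : ∀ x ∈ s, ∀ y ∈ s, x ≤ y → C * (y - x) ≤ f y - f x) {x y : ℝ} (hx : x ∈ s)
    (hy : y ∈ s) : |x - y| ≤ |f x - f y| / C := by
  rw [le_div_iff₀ hC]
  rcases le_total x y with hxy | hxy
  · have := hf x hx y hy hxy
    rw [abs_sub_comm x, abs_sub_comm (f x), abs_of_nonneg (sub_nonneg.2 hxy),
      abs_of_nonneg (by nlinarith)]
    linarith
  · have := hf y hy x hx hxy
    rw [abs_of_nonneg (sub_nonneg.2 hxy), abs_of_nonneg (by nlinarith)]
    linarith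

lemma invFunOn_mem_Icc_sqrt_and_psi_eq {Ψ : ℝ → ℝ} (hΨ : EqOn Ψ psi (Icc 0 1)) {η w : ℝ}
    (hη : 0 ≤ η) (hw : w ∈ Icc η (psi 1)) :
    Function.invFunOn Ψ (Icc 0 1) w ∈ Icc √η 1 ∧ psi (Function.invFunOn Ψ (Icc 0 1) w) = w := by
  have hw_img : w ∈ Ψ '' Icc 0 1 := by
    rw [hΨ.image_eq]
    exact intermediate_value_Icc zero_le_one continuous_psi.continuousOn
      ⟨by rw [psi_zero]; exact hη.trans hw.1, hw.2⟩
  have hmem := Function.invFunOn_mem hw_img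
  have heq : psi (Function.invFunOn Ψ (Icc 0 1) w) = w :=
    (hΨ hmem).symm.trans (Function.invFunOn_eq hw_img)
  exact ⟨⟨(sqrt_le_left hmem.1).2 ((heq ▸ hw.1).trans (psi_le_sq hmem.1)), hmem.2⟩, heq⟩

/-- The inverse of `Ψ(z) = (2/π)(z·arcsin z + √(1-z²) - 1)` on `[0,1]` is
`O(1/√η)`-Lipschitz on `[η, Ψ(1)]`: there is an absolute constant `c > 0` such that
for any `0 < η < 1` and `ẑ, z ∈ [η, Ψ(1)]`,
`|Ψ⁻¹(ẑ) - Ψ⁻¹(z)| ≤ (c/√η)·|ẑ - z|`. -/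
theorem psi_inverse_lipschitz (Ψ : ℝ → ℝ)
    (hΨ : ∀ z ∈ Set.Icc (0:ℝ) 1,
      Ψ z = (2 / π) * (z * arcsin z + Real.sqrt (1 - z ^ 2) - 1)) :
    ∃ c : ℝ, 0 < c ∧ ∀ η : ℝ, 0 < η → η < 1 →
      ∀ zhat z : ℝ, zhat ∈ Set.Icc η (Ψ 1) → z ∈ Set.Icc η (Ψ 1) →
        |Function.invFunOn Ψ (Set.Icc (0:ℝ) 1) zhat -
            Function.invFunOn Ψ (Set.Icc (0:ℝ) 1) z| ≤
          (c / Real.sqrt η) * |zhat - z| := by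
  have hΨ : EqOn Ψ psi (Icc 0 1) := hΨ
  rw [hΨ ⟨zero_le_one, le_rfl⟩]
  refine ⟨π / 2, by positivity, fun η hη _ zhat z hzhat hz => ?_⟩
  obtain ⟨ha, hΨa⟩ := invFunOn_mem_Icc_sqrt_and_psi_eq hΨ hη.le hzhat
  obtain ⟨hb, hΨb⟩ := invFunOn_mem_Icc_sqrt_and_psi_eq hΨ hη.le hz
  have hsqrt : 0 < √η := sqrt_pos.2 hη
  calc _ ≤ |zhat - z| / ((2 / π) * √η) := by
        simpa only [hΨa, hΨb] using abs_sub_le_div_of_mul_sub_le (by positivity)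
          (mul_sub_le_psi_sub hsqrt.le) ha hb
    _ = π / 2 / √η * |zhat - z| := by
        field_simp
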